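/- Let a₀, b₀, a₁ be a V-path in which a₀ = S is a face sequence of type 1, and write a₁ = S′. Then either (i) S′ is of type 1, 2, 5, 6 or 10 and S′ has a 0 at the position of the rightmost 1 of S, or (ii) S′ is of type 2, 3, 4, 7, 8 or 10, S′ has a ∗ at the position of the rightmost 1 of S, and this ∗ is the rightmost ∗ of S′. -/

import Mathlib

set_option linter.unusedVariables false

/-- The alphabet `{0, 1, ∗}` for face sequences. -/
inductive Letter : Type
  | zero
  | one
  | star
  deriving DecidableEq

/-- A sequence of length `n` over the alphabet `{0, 1, ∗}`. -/
abbrev FSeq (n : ℕ) := Fin n → Letter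

/-- `S(1)`, the number of `1`'s in `S`. -/
def count1 {n : ℕ} (S : FSeq n) : ℕ := (Finset.univ.filter fun i => S i = Letter.one).card

/-- `S(0)`, the number of `0`'s in `S`. -/
def count0 {n : ℕ} (S : FSeq n) : ℕ := (Finset.univ.filter fun i => S i = Letter.zero).card

/-- The number of `∗`'s in `S`. -/
def countStar {n : ℕ} (S : FSeq n) : ℕ := (Finset.univ.filter fun i => S i = Letter.star).card

/-- A face sequence: either no `∗` and exactly `k` ones, or at most `k-1` ones and
(#ones) + (#stars) ≥ `k+1`. -/
def FaceSeq {n : ℕ} (k : ℕ) (S : FSeq n) : Prop :=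
  (countStar S = 0 ∧ count1 S = k) ∨ (count1 S + 1 ≤ k ∧ k + 1 ≤ count1 S + countStar S)

/-- `v₀`, the sequence of `k` ones followed by `n - k` zeros. -/
def v0seq (n k : ℕ) : FSeq n := fun i => if (i : ℕ) < k then Letter.one else Letter.zero

/-- `S` contains at least one `∗`. -/
def hasStar {n : ℕ} (S : FSeq n) : Prop := ∃ i, S i = Letter.star

/-- There is a `1` to the right of the rightmost `∗` (in particular `S` contains a `∗`). -/
def OneRight {n : ℕ} (S : FSeq n) : Prop :=
  hasStar S ∧ ∃ i, S i = Letter.one ∧ ∀ j, i < j → S j ≠ Letter.star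

/-- There is no `1` to the right of the rightmost `∗` (and `S` contains a `∗`). -/
def NoOneRight {n : ℕ} (S : FSeq n) : Prop :=
  hasStar S ∧ ∀ i, S i = Letter.one → ∃ j, i < j ∧ S j = Letter.star

/-- There is a `0` to the left of the leftmost `∗` (in particular `S` contains a `∗`). -/
def ZeroLeft {n : ℕ} (S : FSeq n) : Prop :=
  hasStar S ∧ ∃ i, S i = Letter.zero ∧ ∀ j, j < i → S j ≠ Letter.star

/-- There is no `0` to the left of the leftmost `∗` (and `S` contains a `∗`). -/
def NoZeroLeft {n : ℕ} (S : FSeq n) : Prop :=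
  hasStar S ∧ ∀ i, S i = Letter.zero → ∃ j, j < i ∧ S j = Letter.star

/-- `i` is the position of the rightmost `1` of `S`. -/
def IsRightmostOne {n : ℕ} (S : FSeq n) (i : Fin n) : Prop :=
  S i = Letter.one ∧ ∀ j, i < j → S j ≠ Letter.one

/-- `i` is the position of the rightmost `∗` of `S`. -/
def IsRightmostStar {n : ℕ} (S : FSeq n) (i : Fin n) : Prop :=
  S i = Letter.star ∧ ∀ j, i < j → S j ≠ Letter.star

/-- `i` is the position of the leftmost `0` of `S`. -/
def IsLeftmostZero {n : ℕ} (S : FSeq n) (i : Fin n) : Prop :=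
  S i = Letter.zero ∧ ∀ j, j < i → S j ≠ Letter.zero

/-- `i` is the position of the leftmost `∗` of `S`. -/
def IsLeftmostStar {n : ℕ} (S : FSeq n) (i : Fin n) : Prop :=
  S i = Letter.star ∧ ∀ j, j < i → S j ≠ Letter.star

/-- Condition of rule (1), subcondition (a). -/
def Cond1a {n : ℕ} (k m0 m1 : ℕ) (S : FSeq n) : Prop :=
  count1 S + 1 ≤ k ∧ OneRight S ∧ count1 S ≠ m1

/-- Condition of rule (1), subcondition (b). -/
def Cond1b {n : ℕ} (k m0 m1 : ℕ) (S : FSeq n) : Prop :=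
  count1 S + 1 ≤ k ∧ OneRight S ∧ count1 S = m1 ∧ m0 < count0 S

/-- Condition of rule (1), subcondition (c): no `0` to the left of the leftmost `∗`. -/
def Cond1c {n : ℕ} (k m0 m1 : ℕ) (S : FSeq n) : Prop :=
  count1 S + 1 ≤ k ∧ OneRight S ∧ count1 S = m1 ∧ count0 S = m0 ∧ NoZeroLeft S

/-- Condition of rule (2), subcondition (a): here `count1 S + 1 ≠ m1` encodes `S(1) ≠ m₁ - 1`. -/
def Cond2a {n : ℕ} (k m0 m1 : ℕ) (S : FSeq n) : Prop :=
  count1 S + 2 ≤ k ∧ NoOneRight S ∧ count1 S + 1 ≠ m1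

/-- Condition of rule (2), subcondition (b). -/
def Cond2b {n : ℕ} (k m0 m1 : ℕ) (S : FSeq n) : Prop :=
  count1 S + 2 ≤ k ∧ NoOneRight S ∧ count1 S + 1 = m1 ∧ m0 < count0 S

/-- Condition of rule (2), subcondition (c). -/
def Cond2c {n : ℕ} (k m0 m1 : ℕ) (S : FSeq n) : Prop :=
  count1 S + 2 ≤ k ∧ NoOneRight S ∧ count1 S + 1 = m1 ∧ count0 S = m0 ∧ NoZeroLeft S

/-- `S` is of type 1 (satisfies the condition of rule (1)). -/
def Type1 {n : ℕ} (k m0 m1 : ℕ) (S : FSeq n) : Prop :=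
  Cond1a k m0 m1 S ∨ Cond1b k m0 m1 S ∨ Cond1c k m0 m1 S

/-- `S` is of type 2 (satisfies the condition of rule (2)). -/
def Type2 {n : ℕ} (k m0 m1 : ℕ) (S : FSeq n) : Prop :=
  Cond2a k m0 m1 S ∨ Cond2b k m0 m1 S ∨ Cond2c k m0 m1 S

/-- `S` is of type 3: `S(1) = k-1`, `S(0) ≤ n-k-1`, no `1` right of the rightmost `∗`,
a `0` left of the leftmost `∗`. -/
def Type3 {n : ℕ} (k : ℕ) (S : FSeq n) : Prop :=
  count1 S + 1 = k ∧ count0 S + k + 1 ≤ n ∧ NoOneRight S ∧ ZeroLeft S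

/-- `S` is of type 4: `S(1) = k-1`, `S(0) ≤ n-k-2`, no `1` right of the rightmost `∗`,
no `0` left of the leftmost `∗`. -/
def Type4 {n : ℕ} (k : ℕ) (S : FSeq n) : Prop :=
  count1 S + 1 = k ∧ count0 S + k + 2 ≤ n ∧ NoOneRight S ∧ NoZeroLeft S

/-- `S` is of type 5: `S(1) = m₁`, `S(0) ≤ m₀`, a `1` right of the rightmost `∗`,
a `0` left of the leftmost `∗`. -/
def Type5 {n : ℕ} (m0 m1 : ℕ) (S : FSeq n) : Prop :=
  count1 S = m1 ∧ count0 S ≤ m0 ∧ OneRight S ∧ ZeroLeft S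

/-- `S` is of type 6: `S(1) = m₁`, `S(0) < m₀`, a `1` right of the rightmost `∗`,
no `0` left of the leftmost `∗`. -/
def Type6 {n : ℕ} (m0 m1 : ℕ) (S : FSeq n) : Prop :=
  count1 S = m1 ∧ count0 S < m0 ∧ OneRight S ∧ NoZeroLeft S

/-- `S` is of type 7: `S(1) = m₁-1`, `S(0) ≤ m₀`, no `1` right of the rightmost `∗`,
a `0` left of the leftmost `∗`. -/
def Type7 {n : ℕ} (m0 m1 : ℕ) (S : FSeq n) : Prop :=
  count1 S + 1 = m1 ∧ count0 S ≤ m0 ∧ NoOneRight S ∧ ZeroLeft S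

/-- `S` is of type 8: `S(1) = m₁-1`, `S(0) < m₀`, no `1` right of the rightmost `∗`,
no `0` left of the leftmost `∗`. -/
def Type8 {n : ℕ} (m0 m1 : ℕ) (S : FSeq n) : Prop :=
  count1 S + 1 = m1 ∧ count0 S < m0 ∧ NoOneRight S ∧ NoZeroLeft S

/-- `S` is of type 9: `S(1) = k`, `S(0) = n-k`, and `S ≠ v₀`. -/
def Type9 {n : ℕ} (k : ℕ) (S : FSeq n) : Prop :=
  count1 S = k ∧ count0 S + k = n ∧ S ≠ v0seq n k

/-- `S` is of type 10: `S(1) = k-1`, `S(0) = n-k-1`, no `1` right of the rightmost `∗`,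
no `0` left of the leftmost `∗`. -/
def Type10 {n : ℕ} (k : ℕ) (S : FSeq n) : Prop :=
  count1 S + 1 = k ∧ count0 S + k + 1 = n ∧ NoOneRight S ∧ NoZeroLeft S

/-- `S` is of type `i` for `1 ≤ i ≤ 10` (and of no type otherwise). -/
def OfType {n : ℕ} (k m0 m1 : ℕ) (i : ℕ) (S : FSeq n) : Prop :=
  match i with
  | 1 => Type1 k m0 m1 S
  | 2 => Type2 k m0 m1 S
  | 3 => Type3 k S
  | 4 => Type4 k S
  | 5 => Type5 m0 m1 S
  | 6 => Type6 m0 m1 S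
  | 7 => Type7 m0 m1 S
  | 8 => Type8 m0 m1 S
  | 9 => Type9 k S
  | 10 => Type10 k S
  | _ => False

/-- The replacement of rule (1): replace the rightmost `1` with `∗`. -/
def Apply1 {n : ℕ} (S S' : FSeq n) : Prop :=
  ∃ i, IsRightmostOne S i ∧ S' = Function.update S i Letter.star

/-- The replacement of rule (2): replace the rightmost `∗` with `1`. -/
def Apply2 {n : ℕ} (S S' : FSeq n) : Prop :=
  ∃ i, IsRightmostStar S i ∧ S' = Function.update S i Letter.one

/-- The replacement of rules (3), (5) and (7): replace the leftmost `0` with `∗`. -/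
def Apply3 {n : ℕ} (S S' : FSeq n) : Prop :=
  ∃ i, IsLeftmostZero S i ∧ S' = Function.update S i Letter.star

/-- The replacement of rules (4), (6) and (8): replace the leftmost `∗` with `0`. -/
def Apply4 {n : ℕ} (S S' : FSeq n) : Prop :=
  ∃ i, IsLeftmostStar S i ∧ S' = Function.update S i Letter.zero

/-- The replacement of rule (9): replace the leftmost `0` and the rightmost `1` each with `∗`. -/
def Apply9 {n : ℕ} (S S' : FSeq n) : Prop :=
  ∃ i j, IsLeftmostZero S i ∧ IsRightmostOne S j ∧
    S' = Function.update (Function.update S i Letter.star) j Letter.star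

/-- The replacement of rule (10): replace the leftmost `∗` with `0` and the other `∗` with `1`. -/
def Apply10 {n : ℕ} (S S' : FSeq n) : Prop :=
  ∃ i j, IsLeftmostStar S i ∧ IsRightmostStar S j ∧ i ≠ j ∧
    S' = Function.update (Function.update S i Letter.zero) j Letter.one

/-- The matching `V` on face sequences: a face sequence `S` of type 1, 3, 5, 7 or 9 is
matched with the result `S'` of applying the corresponding rule to it. -/
def Vmatch {n : ℕ} (k m0 m1 : ℕ) (S S' : FSeq n) : Prop :=
  FaceSeq k S ∧
    ((Type1 k m0 m1 S ∧ Apply1 S S') ∨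
     (Type3 k S ∧ Apply3 S S') ∨
     (Type5 m0 m1 S ∧ Apply3 S S') ∨
     (Type7 m0 m1 S ∧ Apply3 S S') ∨
     (Type9 k S ∧ Apply9 S S'))

/-- The vertex set of a face sequence `S`: the vertex sequences (0/1-sequences with
exactly `k` ones) agreeing with `S` wherever `S` is not `∗`. -/
def VertexSet {n : ℕ} (k : ℕ) (S : FSeq n) : Set (FSeq n) :=
  {v | (∀ i, v i ≠ Letter.star) ∧ count1 v = k ∧ ∀ i, S i ≠ Letter.star → v i = S i}

/-- The dimension of the face `F(S)`. -/
def fdim {n : ℕ} (S : FSeq n) : ℕ :=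
  if countStar S = 0 then 0 else countStar S - 1

/-- `T` is a codimension-1 face of `S`. -/
def Codim1 {n : ℕ} (k : ℕ) (T S : FSeq n) : Prop :=
  VertexSet k T ⊂ VertexSet k S ∧ fdim T + 1 = fdim S

/-- A (nontrivial) `V`-path `a₀, b₀, a₁, b₁, …, b_r, a_{r+1}` of face sequences. -/
structure VPath (n k m0 m1 r : ℕ) where
  a : Fin (r + 2) → FSeq n
  b : Fin (r + 1) → FSeq n
  face_a : ∀ i, FaceSeq k (a i)
  face_b : ∀ i, FaceSeq k (b i)
  mem : ∀ i : Fin (r + 1), Vmatch k m0 m1 (a i.castSucc) (b i)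
  codim_left : ∀ i : Fin (r + 1), Codim1 k (a i.castSucc) (b i)
  codim_right : ∀ i : Fin (r + 1), Codim1 k (a i.succ) (b i)
  step_ne : ∀ i : Fin (r + 1), a i.castSucc ≠ a i.succ

/-!
Rule (1) turns the rightmost `1` of `a₀`, at position `i`, into a `∗`, so `b₀` is `a₀` with `i`
starred. A codimension-1 face of a face sequence with at least three `∗`'s fixes exactly one of
them, because the vertex set of a face determines its `∗`'s and its other letters. If the fixed
`∗` is the one at `i`, it must become `0` (a `1` gives back `a₀`). Otherwise it is a `∗` of `a₀`,
which lies left of `i` because `a₀` has a `1` to the right of its rightmost `∗`; then `i` is the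
rightmost `∗` of `a₁` and no `1` lies right of it. In both cases the counts of `a₁` leave only
the listed types.
-/

open Finset Function

section Counting

variable {ι α : Type*} [Fintype ι] [DecidableEq ι] [DecidableEq α]

theorem card_filter_update_add (f : ι → α) (i : ι) (x a : α) :
    #{j | update f i x j = a} + (if f i = a then 1 else 0) =
      #{j | f j = a} + (if x = a then 1 else 0) := by
  rw [card_filter, card_filter, ← add_sum_erase _ _ (mem_univ i),
    ← add_sum_erase _ _ (mem_univ i), sum_congr rfl fun j hj => by
      rw [update_of_ne (ne_of_mem_erase hj)], update_self]
  ring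

end Counting

section FaceSequences

variable {n k m0 m1 : ℕ} {S T B : FSeq n} {i j p q : Fin n}

theorem count0_add_count1_add_countStar (S : FSeq n) :
    count0 S + count1 S + countStar S = n := by
  have hsum : ∀ j, ((if S j = Letter.zero then 1 else 0) + (if S j = Letter.one then 1 else 0) +
      (if S j = Letter.star then 1 else 0) : ℕ) = 1 := fun j => by cases S j <;> rfl
  simp only [count0, count1, countStar, card_filter, ← sum_add_distrib, hsum]
  simp

theorem hasStar_iff_countStar_ne_zero : hasStar S ↔ countStar S ≠ 0 := by
  simp [hasStar, countStar]

theorem noOneRight_iff_not_oneRight (h : hasStar S) : NoOneRight S ↔ ¬ OneRight S := by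
  simp [NoOneRight, OneRight, h]

theorem noZeroLeft_iff_not_zeroLeft (h : hasStar S) : NoZeroLeft S ↔ ¬ ZeroLeft S := by
  simp [NoZeroLeft, ZeroLeft, h]

theorem countStar_update_star (h : S i ≠ Letter.star) :
    countStar (update S i Letter.star) = countStar S + 1 := by
  simpa [countStar, h] using card_filter_update_add S i Letter.star Letter.star

theorem count1_update_zero (h : S i = Letter.one) :
    count1 (update S i Letter.zero) + 1 = count1 S := by
  simpa [count1, h] using card_filter_update_add S i Letter.zero Letter.one

theorem count0_update_zero (h : S i = Letter.one) :
    count0 (update S i Letter.zero) = count0 S + 1 := by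
  simpa [count0, h] using card_filter_update_add S i Letter.zero Letter.zero

def stars (S : FSeq n) : Finset (Fin n) := {j | S j = Letter.star}

@[simp]
theorem mem_stars : j ∈ stars S ↔ S j = Letter.star := by simp [stars]

theorem card_stars (S : FSeq n) : #(stars S) = countStar S := rfl

theorem FaceSeq.two_le_countStar (hS : FaceSeq k S) (h : count1 S + 1 ≤ k) :
    2 ≤ countStar S := by
  rcases hS with ⟨_, h'⟩ | ⟨_, h'⟩ <;> omega

def fillStars (S : FSeq n) (B : Finset (Fin n)) : FSeq n :=
  fun j => if j ∈ B then Letter.one else if S j = Letter.star then Letter.zero else S j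

theorem fillStars_mem_vertexSet {B : Finset (Fin n)} (hB : B ⊆ stars S)
    (hcard : #B + count1 S = k) : fillStars S B ∈ VertexSet k S := by
  have hones : ({j | fillStars S B j = Letter.one} : Finset (Fin n)) =
      B ∪ ({j | S j = Letter.one} : Finset (Fin n)) := by
    ext j
    by_cases hj : j ∈ B <;> by_cases hjs : S j = Letter.star <;> simp [fillStars, hj, hjs]
  have hdisj : Disjoint B ({j | S j = Letter.one} : Finset (Fin n)) :=
    disjoint_left.2 fun j hjB hj1 => by simp_all [subset_iff]
  refine ⟨fun j => ?_, ?_, fun j hj => ?_⟩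
  · by_cases hj : j ∈ B <;> by_cases hjs : S j = Letter.star <;> simp [fillStars, hj, hjs]
  · rw [count1, hones, card_union_of_disjoint hdisj, ← hcard, count1]
  · have hjB : j ∉ B := fun h => hj (by simpa using hB h)
    simp [fillStars, hjB, hj]

theorem FaceSeq.exists_vertex (hS : FaceSeq k S) (hq : S q = Letter.star) (y : Letter)
    (hy : y ≠ Letter.star) : ∃ v ∈ VertexSet k S, v q = y := by
  have hstars : q ∈ stars S := mem_stars.2 hq
  obtain ⟨hk1, hk⟩ : count1 S + 1 ≤ k ∧ k + 1 ≤ count1 S + countStar S :=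
    hS.resolve_left fun h => hasStar_iff_countStar_ne_zero.1 ⟨q, hq⟩ h.1
  have hcard := card_erase_of_mem hstars
  rw [card_stars] at hcard
  cases y
  · obtain ⟨B, -, hB, hBcard⟩ := exists_subsuperset_card_eq (empty_subset (erase _ q))
      (Nat.zero_le (k - count1 S)) (by rw [hcard]; omega)
    have hqB : q ∉ B := fun h => by simpa using hB h
    exact ⟨_, fillStars_mem_vertexSet (hB.trans (erase_subset _ _)) (by omega),
      by simp [fillStars, hqB, hq]⟩
  · obtain ⟨B, hqB, hB, hBcard⟩ := exists_subsuperset_card_eq (singleton_subset_iff.2 hstars)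
      (show #{q} ≤ k - count1 S by simp; omega) (by rw [card_stars]; omega)
    exact ⟨_, fillStars_mem_vertexSet hB (by omega),
      by simp [fillStars, singleton_subset_iff.1 hqB]⟩
  · exact absurd rfl hy

theorem FaceSeq.star_of_vertexSet_subset (hT : FaceSeq k T) (h : VertexSet k T ⊆ VertexSet k B)
    (hq : T q = Letter.star) : B q = Letter.star := by
  by_contra hBq
  obtain ⟨v, hv, hvq⟩ := hT.exists_vertex hq Letter.zero (by simp)
  obtain ⟨w, hw, hwq⟩ := hT.exists_vertex hq Letter.one (by simp)
  have : v q = w q := ((h hv).2.2 q hBq).trans ((h hw).2.2 q hBq).symm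
  simp [hvq, hwq] at this

theorem FaceSeq.apply_eq_of_vertexSet_subset (hT : FaceSeq k T) (hT0 : hasStar T)
    (h : VertexSet k T ⊆ VertexSet k B) (hq : T q ≠ Letter.star) (hBq : B q ≠ Letter.star) :
    T q = B q := by
  obtain ⟨r, hr⟩ := hT0
  obtain ⟨v, hv, -⟩ := hT.exists_vertex hr Letter.zero (by simp)
  exact (hv.2.2 q hq).symm.trans ((h hv).2.2 q hBq)

theorem Codim1.countStar_ne_zero (h : Codim1 k T B) (hB : 3 ≤ countStar B) :
    countStar T ≠ 0 := by
  have := h.2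
  unfold fdim at this
  split_ifs at this <;> omega

theorem Codim1.countStar_eq (h : Codim1 k T B) (hT : countStar T ≠ 0) :
    countStar B = countStar T + 1 := by
  have := h.2
  unfold fdim at this
  split_ifs at this <;> omega

theorem Codim1.exists_eq_update (h : Codim1 k T B) (hT : FaceSeq k T) (hT0 : countStar T ≠ 0) :
    ∃ p x, B p = Letter.star ∧ x ≠ Letter.star ∧ T = update B p x := by
  have hsub := h.1.subset
  have hstars : stars T ⊆ stars B :=
    fun j hj => mem_stars.2 (hT.star_of_vertexSet_subset hsub (mem_stars.1 hj))
  obtain ⟨p, hp, hins⟩ := exists_eq_insert_iff.2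
    ⟨hstars, by rw [card_stars, card_stars, h.countStar_eq hT0]⟩
  have hmem : ∀ j, B j = Letter.star ↔ j = p ∨ T j = Letter.star := fun j => by
    simpa using (Finset.ext_iff.1 hins j).symm
  refine ⟨p, T p, (hmem p).2 (Or.inl rfl), by simpa using hp, funext fun j => ?_⟩
  rcases eq_or_ne j p with rfl | hjp
  · simp
  rw [update_of_ne hjp]
  by_cases hj : T j = Letter.star
  · rw [hj, hT.star_of_vertexSet_subset hsub hj]
  · exact hT.apply_eq_of_vertexSet_subset (hasStar_iff_countStar_ne_zero.2 hT0) hsub hj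
      (by simp [hmem, hjp, hj])

theorem Type1.count1_add_one_le (hS : Type1 k m0 m1 S) : count1 S + 1 ≤ k := by
  rcases hS with h | h | h <;> exact h.1

theorem Type1.oneRight (hS : Type1 k m0 m1 S) : OneRight S := by
  rcases hS with h | h | h <;> exact h.2.1

theorem Type1.le_count0 (hS : Type1 k m0 m1 S) (h : count1 S = m1) : m0 ≤ count0 S := by
  rcases hS with ⟨-, -, h'⟩ | ⟨-, -, -, h'⟩ | ⟨-, -, -, h', -⟩ <;> omega

theorem Type1.not_type5 (hS : Type1 k m0 m1 S) : ¬ Type5 m0 m1 S := by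
  rintro ⟨h1, h0, -, hz⟩
  rcases hS with ⟨-, -, h'⟩ | ⟨-, -, -, h'⟩ | ⟨-, -, -, -, h'⟩
  · exact h' h1
  · omega
  · exact (noZeroLeft_iff_not_zeroLeft hz.1).1 h' hz

theorem Vmatch.apply1_of_type1 (hV : Vmatch k m0 m1 S B) (hS : Type1 k m0 m1 S) :
    Apply1 S B := by
  have hOR := hS.oneRight
  rcases hV.2 with ⟨-, h⟩ | ⟨h3, -⟩ | ⟨h5, -⟩ | ⟨h7, -⟩ | ⟨h9, -⟩
  · exact h
  · exact absurd hOR ((noOneRight_iff_not_oneRight hOR.1).1 h3.2.2.1)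
  · exact absurd h5 hS.not_type5
  · exact absurd hOR ((noOneRight_iff_not_oneRight hOR.1).1 h7.2.2.1)
  · exact absurd h9.1 (by have := hS.count1_add_one_le; omega)

theorem OneRight.type1_or_type5_or_type6 (h : OneRight S) (hk : count1 S + 1 ≤ k) :
    Type1 k m0 m1 S ∨ Type5 m0 m1 S ∨ Type6 m0 m1 S := by
  by_cases h1 : count1 S = m1
  · rcases lt_or_ge m0 (count0 S) with h0 | h0
    · exact Or.inl (Or.inr (Or.inl ⟨hk, h, h1, h0⟩))
    by_cases hz : ZeroLeft S
    · exact Or.inr (Or.inl ⟨h1, h0, h, hz⟩)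
    have hnz := (noZeroLeft_iff_not_zeroLeft h.1).2 hz
    rcases h0.lt_or_eq with h0 | h0
    · exact Or.inr (Or.inr ⟨h1, h0, h, hnz⟩)
    · exact Or.inl (Or.inr (Or.inr ⟨hk, h, h1, h0, hnz⟩))
  · exact Or.inl (Or.inl ⟨hk, h, h1⟩)

theorem NoOneRight.type2_or_type7_or_type8 (h : NoOneRight S) (hk : count1 S + 2 ≤ k) :
    Type2 k m0 m1 S ∨ Type7 m0 m1 S ∨ Type8 m0 m1 S := by
  by_cases h1 : count1 S + 1 = m1
  · rcases lt_or_ge m0 (count0 S) with h0 | h0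
    · exact Or.inl (Or.inr (Or.inl ⟨hk, h, h1, h0⟩))
    by_cases hz : ZeroLeft S
    · exact Or.inr (Or.inl ⟨h1, h0, h, hz⟩)
    have hnz := (noZeroLeft_iff_not_zeroLeft h.1).2 hz
    rcases h0.lt_or_eq with h0 | h0
    · exact Or.inr (Or.inr ⟨h1, h0, h, hnz⟩)
    · exact Or.inl (Or.inr (Or.inr ⟨hk, h, h1, h0, hnz⟩))
  · exact Or.inl (Or.inl ⟨hk, h, h1⟩)

theorem FaceSeq.type_of_noOneRight (hS : FaceSeq k S) (h : NoOneRight S) :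
    Type2 k m0 m1 S ∨ Type3 k S ∨ Type4 k S ∨ Type7 m0 m1 S ∨ Type8 m0 m1 S ∨ Type10 k S := by
  have hk : count1 S + 1 ≤ k :=
    (hS.resolve_left fun h' => hasStar_iff_countStar_ne_zero.1 h.1 h'.1).1
  rcases Nat.lt_or_ge (count1 S + 1) k with hk2 | hk1
  · rcases h.type2_or_type7_or_type8 (m0 := m0) (m1 := m1) hk2 with h2 | h7 | h8
    exacts [Or.inl h2, Or.inr (Or.inr (Or.inr (Or.inl h7))),
      Or.inr (Or.inr (Or.inr (Or.inr (Or.inl h8))))]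
  have htotal := count0_add_count1_add_countStar S
  have hstar := hS.two_le_countStar hk
  by_cases hz : ZeroLeft S
  · exact Or.inr (Or.inl ⟨by omega, by omega, h, hz⟩)
  have hnz := (noZeroLeft_iff_not_zeroLeft h.1).2 hz
  rcases hstar.lt_or_eq with hstar | hstar
  · exact Or.inr (Or.inr (Or.inl ⟨by omega, by omega, h, hnz⟩))
  · exact Or.inr (Or.inr (Or.inr (Or.inr (Or.inr ⟨by omega, by omega, h, hnz⟩))))

theorem OneRight.lt_of_isRightmostOne (hS : OneRight S) (hi : IsRightmostOne S i)
    (hj : S j = Letter.star) : j < i := by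
  obtain ⟨-, z, hz, hzr⟩ := hS
  have hzi : z ≤ i := not_lt.1 fun h => hi.2 z h hz
  by_contra! hij
  rcases hij.lt_or_eq with h | rfl
  · exact hzr j (hzi.trans_lt h) hj
  · simp [hi.1] at hj

theorem Type1.type_update_zero (hS : Type1 k m0 m1 S) (hi : IsRightmostOne S i) :
    Type1 k m0 m1 (update S i Letter.zero) ∨ Type2 k m0 m1 (update S i Letter.zero) ∨
      Type5 m0 m1 (update S i Letter.zero) ∨ Type6 m0 m1 (update S i Letter.zero) ∨
      Type10 k (update S i Letter.zero) := by
  have hk := hS.count1_add_one_le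
  have h1 := count1_update_zero hi.1
  obtain ⟨⟨q, hq⟩, -⟩ := hS.oneRight
  have hT : hasStar (update S i Letter.zero) :=
    ⟨q, by rwa [update_of_ne (by rintro rfl; simp [hi.1] at hq)]⟩
  by_cases hOR : OneRight (update S i Letter.zero)
  · rcases hOR.type1_or_type5_or_type6 (k := k) (m0 := m0) (m1 := m1) (by omega) with h | h | h
    exacts [Or.inl h, Or.inr (Or.inr (Or.inl h)), Or.inr (Or.inr (Or.inr (Or.inl h)))]
  have h0 := count0_update_zero hi.1
  rcases ((noOneRight_iff_not_oneRight hT).2 hOR).type2_or_type7_or_type8 (k := k) (m0 := m0)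
    (m1 := m1) (by omega) with h | ⟨h7, h7', -⟩ | ⟨h8, h8', -⟩
  · exact Or.inr (Or.inl h)
  · have := hS.le_count0 (by omega); omega
  · have := hS.le_count0 (by omega); omega

theorem OneRight.update_update_apply_of_lt (hS : OneRight S) (hi : IsRightmostOne S i)
    (hp : S p = Letter.star) (x : Letter) (hj : i < j) :
    update (update S i Letter.star) p x j = S j := by
  rw [update_of_ne ((hS.lt_of_isRightmostOne hi hp).trans hj).ne', update_of_ne hj.ne']

theorem OneRight.isRightmostStar_update_update (hS : OneRight S) (hi : IsRightmostOne S i)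
    (hp : S p = Letter.star) (x : Letter) :
    IsRightmostStar (update (update S i Letter.star) p x) i := by
  refine ⟨?_, fun j hj => ?_⟩
  · rw [update_of_ne (hS.lt_of_isRightmostOne hi hp).ne', update_self]
  · rw [hS.update_update_apply_of_lt hi hp x hj]
    exact fun hjs => (hS.lt_of_isRightmostOne hi hjs).not_gt hj

theorem OneRight.noOneRight_update_update (hS : OneRight S) (hi : IsRightmostOne S i)
    (hp : S p = Letter.star) (x : Letter) :
    NoOneRight (update (update S i Letter.star) p x) := by
  have hstar := (hS.isRightmostStar_update_update hi hp x).1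
  refine ⟨⟨i, hstar⟩, fun j hj => ⟨i, ?_, hstar⟩⟩
  by_contra! hij
  rcases hij.lt_or_eq with h | rfl
  · exact hi.2 j h (hS.update_update_apply_of_lt hi hp x h ▸ hj)
  · simp [hstar] at hj

end FaceSequences

theorem vpath_from_type1_general (n k m0 m1 : ℕ) (P : VPath n k m0 m1 0) (h0 : Type1 k m0 m1 (P.a 0)) :
    ((Type1 k m0 m1 (P.a 1) ∨ Type2 k m0 m1 (P.a 1) ∨ Type5 m0 m1 (P.a 1) ∨
        Type6 m0 m1 (P.a 1) ∨ Type10 k (P.a 1)) ∧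
      ∃ i, IsRightmostOne (P.a 0) i ∧ P.a 1 i = Letter.zero) ∨
    ((Type2 k m0 m1 (P.a 1) ∨ Type3 k (P.a 1) ∨ Type4 k (P.a 1) ∨ Type7 m0 m1 (P.a 1) ∨
        Type8 m0 m1 (P.a 1) ∨ Type10 k (P.a 1)) ∧
      ∃ i, IsRightmostOne (P.a 0) i ∧ P.a 1 i = Letter.star ∧ IsRightmostStar (P.a 1) i) := by
  have hV : Vmatch k m0 m1 (P.a 0) (P.b 0) := P.mem 0
  have hne : P.a 0 ≠ P.a 1 := P.step_ne 0
  obtain ⟨i, hi, hb⟩ := hV.apply1_of_type1 h0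
  have hb3 : 3 ≤ countStar (P.b 0) := by
    rw [hb, countStar_update_star (by simp [hi.1])]
    have := (P.face_a 0).two_le_countStar h0.count1_add_one_le
    omega
  have hcod : Codim1 k (P.a 1) (P.b 0) := P.codim_right 0
  obtain ⟨p, x, hp, hx, hT⟩ := hcod.exists_eq_update (P.face_a 1) (hcod.countStar_ne_zero hb3)
  rw [hb] at hp hT
  by_cases hpi : p = i
  · subst hpi
    have hx0 : x = Letter.zero := by
      cases x
      · rfl
      · exact absurd (by rw [hT, update_idem, ← hi.1, update_eq_self]) hne
      · exact absurd rfl hx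
    rw [hx0, update_idem] at hT
    exact Or.inl ⟨hT ▸ h0.type_update_zero hi, p, hi, by simp [hT]⟩
  · have hSp : P.a 0 p = Letter.star := by rwa [update_of_ne hpi] at hp
    have hrs := h0.oneRight.isRightmostStar_update_update hi hSp x
    rw [← hT] at hrs
    exact Or.inr ⟨(P.face_a 1).type_of_noOneRight
      (hT ▸ h0.oneRight.noOneRight_update_update hi hSp x), i, hi, hrs.1, hrs⟩

/-- In a `V`-path `a₀, b₀, a₁` with `a₀` of type 1, either `a₁` is of
type 1, 2, 5, 6 or 10 and has a `0` at the position of the rightmost `1` of `a₀`, or `a₁`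
is of type 2, 3, 4, 7, 8 or 10, has a `∗` at the position of the rightmost `1` of `a₀`,
and this `∗` is the rightmost `∗` of `a₁`. -/
theorem vpath_from_type1 (n k m0 m1 : ℕ) (hk1 : 1 ≤ k) (hk2 : k ≤ n - 1)
    (hm0 : m0 + k + 1 ≤ n) (hm1l : 1 ≤ m1) (hm1u : m1 + 1 ≤ k)
    (P : VPath n k m0 m1 0) (h0 : Type1 k m0 m1 (P.a 0)) :
    ((Type1 k m0 m1 (P.a 1) ∨ Type2 k m0 m1 (P.a 1) ∨ Type5 m0 m1 (P.a 1) ∨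
        Type6 m0 m1 (P.a 1) ∨ Type10 k (P.a 1)) ∧
      ∃ i, IsRightmostOne (P.a 0) i ∧ P.a 1 i = Letter.zero) ∨
    ((Type2 k m0 m1 (P.a 1) ∨ Type3 k (P.a 1) ∨ Type4 k (P.a 1) ∨ Type7 m0 m1 (P.a 1) ∨
        Type8 m0 m1 (P.a 1) ∨ Type10 k (P.a 1)) ∧
      ∃ i, IsRightmostOne (P.a 0) i ∧ P.a 1 i = Letter.star ∧ IsRightmostStar (P.a 1) i) :=
  vpath_from_type1_general n k m0 m1 P h0
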